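/- arXiv:1303.6609 — 3 statements merged into one kernel-verified Lean document; each statement's English description precedes it below -/
import Mathlib

section
/- Let v : Fin n → α (with n ≥ 1) together with o, c : α → ℝ be an admissible candidate stream. Suppose for some index k with k + 1 < n the early-termination condition holds: the minimum of c (v i) over all i ≤ k is at most o (v (k+1)). Then the minimum of c (v i) over i ≤ k equals the minimum of c (v i) over all i < n. (Correctness of early termination in the best-first rewrite search: once the best rewrite cost found so far is at most the OptCost of the next unexamined candidate view, that best cost is the globally optimal rewrite cost.) -/
/-- Correctness of early termination in the best-first rewrite search:
for an admissible candidate stream (OptCost `o` lower-bounds Cost `c`, and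
candidates are enumerated in nondecreasing OptCost order), once the minimum
cost among the examined prefix `i ≤ k` is at most the OptCost of the next
unexamined candidate `v (k+1)`, that prefix minimum is the global minimum. -/
theorem stmt_0 {α : Type*} {n : ℕ} (hn : 1 ≤ n) (v : Fin n → α) (o c : α → ℝ)
    (hlb : ∀ i : Fin n, o (v i) ≤ c (v i))
    (hsorted : ∀ i j : Fin n, i ≤ j → o (v i) ≤ o (v j))
    (k : ℕ) (hk : k + 1 < n)
    (hterm : (Finset.univ.filter (fun i : Fin n => (i : ℕ) ≤ k)).inf'
        ⟨⟨0, by omega⟩, by simp⟩ (fun i => c (v i)) ≤ o (v ⟨k + 1, hk⟩)) :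
    (Finset.univ.filter (fun i : Fin n => (i : ℕ) ≤ k)).inf'
        ⟨⟨0, by omega⟩, by simp⟩ (fun i => c (v i))
      = Finset.univ.inf' ⟨⟨0, by omega⟩, Finset.mem_univ _⟩ (fun i => c (v i)) := by
  apply le_antisymm
  · apply Finset.le_inf'
    intro i _
    by_cases h : (i : ℕ) ≤ k
    · exact Finset.inf'_le _ (by simp [h])
    · refine hterm.trans ((hsorted ⟨k + 1, hk⟩ i ?_).trans (hlb i))
      exact Fin.mk_le_of_le_val (by omega)
  · apply Finset.inf'_mono
    exact Finset.filter_subset _ _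
end

section
/- Let v : Fin n → α (with n ≥ 1) together with o, c : α → ℝ be an admissible candidate stream. Suppose index j (with 0 < j) satisfies the continuation condition under which the algorithm examines v j: o (v j) < min over i < j of c (v i). Then o (v j) ≤ min over all i < n of c (v i). (Work-efficiency half of Theorem 1 for a single search queue: the best-first algorithm never examines a candidate view whose OptCost exceeds the cost of the optimal rewrite r*.) -/
/-- Work-efficiency half of Theorem 1 for a single search queue: for an
admissible candidate stream, if the algorithm examines candidate `v j`
(i.e. its OptCost is strictly below the best cost found among `v 0, …, v (j-1)`),
then its OptCost is at most the optimal rewrite cost, the minimum of `c (v i)`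
over all candidates. -/
theorem stmt_1 {α : Type*} {n : ℕ} (hn : 1 ≤ n) (v : Fin n → α) (o c : α → ℝ)
    (hlb : ∀ i : Fin n, o (v i) ≤ c (v i))
    (hsorted : ∀ i j : Fin n, i ≤ j → o (v i) ≤ o (v j))
    (j : Fin n) (hj : 0 < (j : ℕ))
    (hcont : o (v j) < (Finset.univ.filter (fun i : Fin n => (i : ℕ) < (j : ℕ))).inf'
        ⟨⟨0, by omega⟩, Finset.mem_filter.mpr ⟨Finset.mem_univ _, hj⟩⟩ (fun i => c (v i))) :
    o (v j) ≤ Finset.univ.inf' ⟨j, Finset.mem_univ _⟩ (fun i => c (v i)) := by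
  apply Finset.le_inf'
  intro i _
  rcases lt_or_ge (i : ℕ) (j : ℕ) with h | h
  · exact le_of_lt (lt_of_lt_of_le hcont (Finset.inf'_le (fun i => c (v i)) (Finset.mem_filter.mpr ⟨Finset.mem_univ i, h⟩)))
  · exact le_trans (hsorted j i (by exact_mod_cast h)) (hlb i)
end

section
/- Let T be a nonempty finite index set of targets, for each t ∈ T a nonempty finite set V t with functions o t, c t : V t → ℝ satisfying o t x ≤ c t x for all x ∈ V t, and let b ∈ ℝ. For a selection f (with f t ∈ V t for each t) define the composite OptCost O f = b + Σ_t o t (f t) and the composite cost C f = b + Σ_t c t (f t). Let f 0, f 1, ..., f (N-1) be an enumeration of all selections sorted so that O (f i) is nondecreasing in i. If for some k with k + 1 < N the early-termination condition min over i ≤ k of C (f i) ≤ O (f (k+1)) holds, then min over i ≤ k of C (f i) = b + Σ_{t ∈ T} (min over x ∈ V t of c t x). (Theorem 1 in the multi-target case: the n per-target priority queues reduce to one virtual global priority queue of composite potential rewrites ordered by composite OptCost, and the best-first procedure over it terminates with the globally optimal rewrite cost of W.) -/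
/-- Theorem 1 in the multi-target case: enumerating all composite selections
(one candidate per target) in nondecreasing composite-OptCost order, once the
early-termination condition holds at index `k`, the cheapest composite rewrite
found among the first `k+1` composites equals the globally optimal rewrite
cost `b + Σ_t min_{x ∈ V t} c t x`. -/
theorem stmt_6 {ι : Type*} [Fintype ι] [Nonempty ι] [DecidableEq ι]
    (V : ι → Type*) [∀ t, Fintype (V t)] [∀ t, Nonempty (V t)]
    (o c : ∀ t, V t → ℝ)
    (hlb : ∀ t (x : V t), o t x ≤ c t x)
    (b : ℝ) (N : ℕ) (f : Fin N → (∀ t, V t))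
    (hbij : Function.Bijective f)
    (hsorted : ∀ i j : Fin N, i ≤ j →
      b + ∑ t, o t (f i t) ≤ b + ∑ t, o t (f j t))
    (k : ℕ) (hk : k + 1 < N)
    (hterm : (Finset.univ.filter (fun i : Fin N => (i : ℕ) ≤ k)).inf'
        ⟨⟨0, by omega⟩, by simp⟩ (fun i => b + ∑ t, c t (f i t))
      ≤ b + ∑ t, o t (f ⟨k + 1, hk⟩ t)) :
    (Finset.univ.filter (fun i : Fin N => (i : ℕ) ≤ k)).inf'
        ⟨⟨0, by omega⟩, by simp⟩ (fun i => b + ∑ t, c t (f i t))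
      = b + ∑ t, Finset.univ.inf' Finset.univ_nonempty (fun x => c t x) := by
  -- choose per-target argmin
  have hg : ∀ t : ι, ∃ x : V t,
      (Finset.univ.inf' Finset.univ_nonempty (fun x => c t x)) = c t x := by
    intro t
    obtain ⟨x, -, hx⟩ := Finset.exists_mem_eq_inf' (Finset.univ_nonempty) (fun x => c t x)
    exact ⟨x, hx⟩
  choose g hgeq using hg
  obtain ⟨j, hj⟩ := hbij.2 g
  have hge : b + ∑ t, Finset.univ.inf' Finset.univ_nonempty (fun x => c t x)
      ≤ (Finset.univ.filter (fun i : Fin N => (i : ℕ) ≤ k)).inf'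
        ⟨⟨0, by omega⟩, by simp⟩ (fun i => b + ∑ t, c t (f i t)) := by
    apply Finset.le_inf'
    intro i _
    gcongr with t
    exact Finset.inf'_le _ (Finset.mem_univ _)
  refine le_antisymm ?_ hge
  by_cases hjk : (j : ℕ) ≤ k
  · calc _ ≤ b + ∑ t, c t (f j t) :=
          Finset.inf'_le (fun i : Fin N => b + ∑ t, c t (f i t)) (by simp [hjk])
      _ = b + ∑ t, Finset.univ.inf' Finset.univ_nonempty (fun x => c t x) := by
          rw [hj]
          exact congrArg (b + ·) (Finset.sum_congr rfl fun t _ => (hgeq t).symm)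
  · calc _ ≤ b + ∑ t, o t (f ⟨k + 1, hk⟩ t) := hterm
      _ ≤ b + ∑ t, o t (f j t) := hsorted _ _ (by simp [Fin.le_def]; omega)
      _ ≤ b + ∑ t, c t (f j t) := by gcongr with t; exact hlb _ _
      _ = b + ∑ t, Finset.univ.inf' Finset.univ_nonempty (fun x => c t x) := by
          rw [hj]
          exact congrArg (b + ·) (Finset.sum_congr rfl fun t _ => (hgeq t).symm)
end
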